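/- (Binary-outcome rank condition for Theorem 3.) Suppose 𝒴 = {0,1}. Fix t ∈ 𝒯 and assume Assumption 3 holds, that P(X=x, T=t, R^X=1, R^T=1) > 0 for all x ∈ 𝒳, and that P(R^Y=1 | T=t, Y=y, R^X=1, R^T=1) > 0 for y ∈ {0,1}. Then the |𝒳| × 2 matrix Θ_t with entries Θ_t(x,y) = P(Y=y, R^Y=1 | T=t, X=x, R^X=1, R^T=1) has rank 2 if and only if there exist x, x' ∈ 𝒳 with P(Y=1 | X=x, T=t) ≠ P(Y=1 | X=x', T=t), i.e., if and only if Y and X are conditionally dependent given T=t. -/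

import Mathlib

open scoped Classical
noncomputable section

namespace CATEMNAR

variable {Ω : Type*} [Fintype Ω]

/-- Probability of the event `E` under the pmf `p` on the finite space `Ω`. -/
def Pr (p : Ω → ℝ) (E : Ω → Prop) : ℝ := ∑ ω, if E ω then p ω else 0

/-- Conditional probability `P(E | C)` (junk value `0` when `P(C) = 0`). -/
def CPr (p : Ω → ℝ) (E C : Ω → Prop) : ℝ := Pr p (fun ω => E ω ∧ C ω) / Pr p C

/-- Conditional independence `A ⫫ B | C` under `p`: for all values `a, b, c` with
`P(C = c) > 0`, `P(A = a, B = b | C = c) = P(A = a | C = c) * P(B = b | C = c)`. -/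
def CondIndep {α β γ : Type*} (p : Ω → ℝ) (A : Ω → α) (B : Ω → β) (C : Ω → γ) : Prop :=
  ∀ (a : α) (b : β) (c : γ), 0 < Pr p (fun ω => C ω = c) →
    CPr p (fun ω => A ω = a ∧ B ω = b) (fun ω => C ω = c) =
      CPr p (fun ω => A ω = a) (fun ω => C ω = c) *
        CPr p (fun ω => B ω = b) (fun ω => C ω = c)

lemma Pr_nonneg (p : Ω → ℝ) (hp0 : ∀ ω, 0 ≤ p ω) (E : Ω → Prop) : 0 ≤ Pr p E :=
  Finset.sum_nonneg fun ω _ => by split_ifs; exacts [hp0 ω, le_refl 0]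

lemma Pr_congr {p : Ω → ℝ} {E F : Ω → Prop} (h : ∀ ω, E ω ↔ F ω) : Pr p E = Pr p F := by
  unfold Pr; exact Finset.sum_congr rfl fun ω _ => by rw [if_congr (h ω) rfl rfl]

lemma Pr_mono (p : Ω → ℝ) (hp0 : ∀ ω, 0 ≤ p ω) {E F : Ω → Prop} (h : ∀ ω, E ω → F ω) :
    Pr p E ≤ Pr p F := by
  refine Finset.sum_le_sum fun ω _ => ?_
  split_ifs with h1 h2
  exacts [le_refl _, absurd (h ω h1) h2, hp0 ω, le_refl 0]

lemma Pr_split (p : Ω → ℝ) (B : Ω → Prop) (Y : Ω → Bool) :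
    Pr p (fun ω => Y ω = false ∧ B ω) + Pr p (fun ω => Y ω = true ∧ B ω) = Pr p B := by
  unfold Pr
  rw [← Finset.sum_add_distrib]
  refine Finset.sum_congr rfl fun ω _ => ?_
  cases h : Y ω <;> by_cases hB : B ω <;> simp [h, hB]

lemma pos_of_CPr_pos {p : Ω → ℝ} {E C : Ω → Prop} (hp0 : ∀ ω, 0 ≤ p ω)
    (h : 0 < CPr p E C) : 0 < Pr p C := by
  rcases lt_or_eq_of_le (Pr_nonneg p hp0 C) with h' | h'
  · exact h'
  · exfalso; rw [CPr, ← h', div_zero] at h; exact lt_irrefl 0 h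

lemma CPr_congr {p : Ω → ℝ} {E E' C C' : Ω → Prop} (hE : ∀ ω, E ω ↔ E' ω)
    (hC : ∀ ω, C ω ↔ C' ω) : CPr p E C = CPr p E' C' := by
  unfold CPr
  rw [Pr_congr (p := p) (fun ω => and_congr (hE ω) (hC ω)), Pr_congr (p := p) hC]

lemma chain2 {p : Ω → ℝ} {E F C : Ω → Prop} (hC : Pr p C ≠ 0)
    (h : CPr p (fun ω => E ω ∧ F ω) C = CPr p E C * CPr p F C) :
    Pr p (fun ω => E ω ∧ F ω ∧ C ω) * Pr p C
      = Pr p (fun ω => E ω ∧ C ω) * Pr p (fun ω => F ω ∧ C ω) := by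
  unfold CPr at h
  rw [div_eq_iff hC] at h
  rw [Pr_congr (p := p) (show ∀ ω, (E ω ∧ F ω ∧ C ω) ↔ ((E ω ∧ F ω) ∧ C ω) by tauto)]
  field_simp at h
  apply mul_right_cancel₀ hC
  linear_combination (Pr p C) * h

lemma chain2' {p : Ω → ℝ} {E F C C' : Ω → Prop} (hCC : ∀ ω, C ω ↔ C' ω) (hC : Pr p C' ≠ 0)
    (h : CPr p (fun ω => E ω ∧ F ω) C = CPr p E C * CPr p F C) :
    Pr p (fun ω => E ω ∧ F ω ∧ C' ω) * Pr p C'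
      = Pr p (fun ω => E ω ∧ C' ω) * Pr p (fun ω => F ω ∧ C' ω) := by
  have h' : CPr p (fun ω => E ω ∧ F ω) C' = CPr p E C' * CPr p F C' := by
    rw [← CPr_congr (p := p) (E := fun ω => E ω ∧ F ω) (fun _ => Iff.rfl) hCC,
        ← CPr_congr (p := p) (E := E) (fun _ => Iff.rfl) hCC,
        ← CPr_congr (p := p) (E := F) (fun _ => Iff.rfl) hCC]
    exact h
  exact chain2 hC h'

lemma rank_lemma {𝒳 : Type*} [Fintype 𝒳] (q : 𝒳 → Bool → ℝ) (c : Bool → ℝ)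
    (hc : ∀ y, 0 < c y) (hsum : ∀ x, q x false + q x true = 1) :
    (Matrix.of fun x y => q x y * c y).rank = 2 ↔ ∃ x x', q x true ≠ q x' true := by
  classical
  set M : Matrix 𝒳 Bool ℝ := Matrix.of fun x y => q x y * c y with hM
  have hdom : Module.finrank ℝ (Bool → ℝ) = 2 := by
    rw [Module.finrank_pi]; simp
  have hrn := LinearMap.finrank_range_add_finrank_ker M.mulVecLin
  rw [hdom] at hrn
  have hrank : M.rank = Module.finrank ℝ (LinearMap.range M.mulVecLin) := rfl
  have hmv : ∀ w : Bool → ℝ, ∀ x : 𝒳, M.mulVec w x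
      = q x false * c false * w false + q x true * c true * w true := by
    intro w x
    simp [Matrix.mulVec, dotProduct, Fintype.sum_bool, hM]
    ring
  constructor
  · intro h2
    by_contra hne
    push_neg at hne
    have hXne : Nonempty 𝒳 := by
      by_contra hempty
      rw [not_nonempty_iff] at hempty
      have h0 : M.rank ≤ 0 := by
        simpa using M.rank_le_card_height
      omega
    obtain ⟨x0⟩ := hXne
    set w : Bool → ℝ := fun b => if b then -(q x0 false * c false) else q x0 true * c true with hw
    have hker : M.mulVec w = 0 := by
      funext x
      rw [hmv]
      have h1 := hne x x0
      have h2 := hsum x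
      have h3 := hsum x0
      have hxf : q x false = q x0 false := by linarith
      simp only [hw]
      show q x false * c false * (if (false:Bool) = true then -(q x0 false * c false) else q x0 true * c true) + q x true * c true * (if (true:Bool) = true then -(q x0 false * c false) else q x0 true * c true) = (0:ℝ)
      norm_num
      linear_combination (c false * c true * q x0 true) * hxf - (c true * c false * q x0 false) * h1
    have hwne : w ≠ 0 := by
      intro h0
      have h1 : q x0 true * c true = 0 := by
        have := congrFun h0 false; simpa [hw] using this
      have h2 : q x0 false * c false = 0 := by
        have := congrFun h0 true; simpa [hw] using this
      have hc0 := (hc false).ne'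
      have hc1 := (hc true).ne'
      have := hsum x0
      rcases mul_eq_zero.mp h1 with h | h
      · rcases mul_eq_zero.mp h2 with h' | h'
        · linarith
        · exact hc0 h'
      · exact hc1 h
    have hk0 : Module.finrank ℝ (LinearMap.ker M.mulVecLin) = 0 := by
      rw [hrank] at h2; omega
    rw [Submodule.finrank_eq_zero] at hk0
    have : w ∈ LinearMap.ker M.mulVecLin := by
      rw [LinearMap.mem_ker, Matrix.mulVecLin_apply, hker]
    rw [hk0, Submodule.mem_bot] at this
    exact hwne this
  · rintro ⟨x, x', hqq⟩
    have hker : LinearMap.ker M.mulVecLin = ⊥ := by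
      rw [LinearMap.ker_eq_bot']
      intro w hw0
      have ex := congrFun (show M.mulVec w = 0 from hw0) x
      have ex' := congrFun (show M.mulVec w = 0 from hw0) x'
      rw [hmv] at ex ex'
      simp only [Pi.zero_apply] at ex ex'
      have hf : q x false = 1 - q x true := by have := hsum x; linarith
      have hf' : q x' false = 1 - q x' true := by have := hsum x'; linarith
      rw [hf] at ex; rw [hf'] at ex'
      have h5 : (q x true - q x' true) * (c true * w true - c false * w false) = 0 := by
        linear_combination ex - ex'
      have h6 : c true * w true = c false * w false := by
        rcases mul_eq_zero.mp h5 with h | h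
        · exact absurd (by linarith : q x true = q x' true) hqq
        · linarith
      have hwf : w false = 0 := by
        have h7 : c false * w false = 0 := by linear_combination ex - q x true * h6
        rcases mul_eq_zero.mp h7 with h | h
        · exact absurd h (hc false).ne'
        · exact h
      have hwt : w true = 0 := by
        have h8 : c true * w true = 0 := by rw [h6, hwf, mul_zero]
        rcases mul_eq_zero.mp h8 with h | h
        · exact absurd h (hc true).ne'
        · exact h
      funext b; cases b <;> simp [hwf, hwt]
    rw [hrank]
    rw [hker] at hrn
    simpa using hrn

/-- Binary-outcome rank condition for Theorem 3: with `𝒴 = {0,1}` (here `Bool`), the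
`|𝒳| × 2` matrix `Θ_t` has rank 2 if and only if `Y` and `X` are conditionally dependent
given `T = t`. -/
theorem stmt_12 {𝒳 𝒯 : Type*} [Fintype 𝒳] [Fintype 𝒯] [DecidableEq 𝒳]
    (p : Ω → ℝ) (hp0 : ∀ ω, 0 ≤ p ω) (hp1 : ∑ ω, p ω = 1)
    (X : Ω → 𝒳) (T : Ω → 𝒯) (Y : Ω → Bool) (RX RT RY : Ω → Bool)
    (hRX : CondIndep p RX Y (fun ω => (X ω, T ω)))
    (hRT : CondIndep p RT Y (fun ω => (X ω, T ω, RX ω)))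
    (hRY : CondIndep p RY X (fun ω => (T ω, Y ω, RX ω, RT ω)))
    (t : 𝒯)
    (hpos : ∀ x : 𝒳,
      0 < Pr p (fun ω => X ω = x ∧ T ω = t ∧ RX ω = true ∧ RT ω = true))
    (hres : ∀ y : Bool,
      0 < CPr p (fun ω => RY ω = true)
        (fun ω => T ω = t ∧ Y ω = y ∧ RX ω = true ∧ RT ω = true)) :
    (Matrix.of fun (x : 𝒳) (y : Bool) =>
        CPr p (fun ω => Y ω = y ∧ RY ω = true)
          (fun ω => T ω = t ∧ X ω = x ∧ RX ω = true ∧ RT ω = true)).rank = 2 ↔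
      ∃ x x' : 𝒳,
        CPr p (fun ω => Y ω = true) (fun ω => X ω = x ∧ T ω = t) ≠
          CPr p (fun ω => Y ω = true) (fun ω => X ω = x' ∧ T ω = t) := by
  have key : ∀ (x : 𝒳) (y : Bool),
      CPr p (fun ω => Y ω = y ∧ RY ω = true)
          (fun ω => T ω = t ∧ X ω = x ∧ RX ω = true ∧ RT ω = true)
        = CPr p (fun ω => Y ω = y) (fun ω => X ω = x ∧ T ω = t)
          * CPr p (fun ω => RY ω = true)
              (fun ω => T ω = t ∧ Y ω = y ∧ RX ω = true ∧ RT ω = true) := by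
    intro x y
    have hA : 0 < Pr p (fun ω => X ω = x ∧ T ω = t ∧ RX ω = true ∧ RT ω = true) := hpos x
    have hB1 : 0 < Pr p (fun ω => X ω = x ∧ T ω = t ∧ RX ω = true) :=
      lt_of_lt_of_le hA (Pr_mono p hp0 (by tauto))
    have hB2 : 0 < Pr p (fun ω => X ω = x ∧ T ω = t) :=
      lt_of_lt_of_le hA (Pr_mono p hp0 (by tauto))
    have hCy : 0 < Pr p (fun ω => T ω = t ∧ Y ω = y ∧ RX ω = true ∧ RT ω = true) :=
      pos_of_CPr_pos hp0 (hres y)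
    have hc2 : ∀ ω, ((X ω, T ω) = (x, t)) ↔ (X ω = x ∧ T ω = t) := fun ω => by
      simp [Prod.ext_iff]
    have hc3 : ∀ ω, ((X ω, T ω, RX ω) = (x, t, true)) ↔ (X ω = x ∧ T ω = t ∧ RX ω = true) :=
      fun ω => by simp [Prod.ext_iff]
    have hc4 : ∀ ω, ((T ω, Y ω, RX ω, RT ω) = (t, y, true, true)) ↔
        (T ω = t ∧ Y ω = y ∧ RX ω = true ∧ RT ω = true) := fun ω => by simp [Prod.ext_iff]
    -- L3 : from hRX
    have L3 : Pr p (fun ω => Y ω = y ∧ X ω = x ∧ T ω = t ∧ RX ω = true)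
          * Pr p (fun ω => X ω = x ∧ T ω = t)
        = Pr p (fun ω => X ω = x ∧ T ω = t ∧ RX ω = true)
          * Pr p (fun ω => Y ω = y ∧ X ω = x ∧ T ω = t) := by
      have h := chain2' hc2 hB2.ne' (hRX true y (x, t) (by rw [Pr_congr (p := p) hc2]; exact hB2))
      rw [Pr_congr (p := p) (show ∀ ω, (Y ω = y ∧ X ω = x ∧ T ω = t ∧ RX ω = true)
            ↔ (RX ω = true ∧ Y ω = y ∧ X ω = x ∧ T ω = t) by tauto),
          Pr_congr (p := p) (show ∀ ω, (X ω = x ∧ T ω = t ∧ RX ω = true)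
            ↔ (RX ω = true ∧ X ω = x ∧ T ω = t) by tauto)]
      exact h
    -- L2 : from hRT
    have L2 : Pr p (fun ω => Y ω = y ∧ X ω = x ∧ T ω = t ∧ RX ω = true ∧ RT ω = true)
          * Pr p (fun ω => X ω = x ∧ T ω = t ∧ RX ω = true)
        = Pr p (fun ω => X ω = x ∧ T ω = t ∧ RX ω = true ∧ RT ω = true)
          * Pr p (fun ω => Y ω = y ∧ X ω = x ∧ T ω = t ∧ RX ω = true) := by
      have h := chain2' hc3 hB1.ne' (hRT true y (x, t, true) (by rw [Pr_congr (p := p) hc3]; exact hB1))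
      rw [Pr_congr (p := p) (show ∀ ω, (Y ω = y ∧ X ω = x ∧ T ω = t ∧ RX ω = true ∧ RT ω = true)
            ↔ (RT ω = true ∧ Y ω = y ∧ X ω = x ∧ T ω = t ∧ RX ω = true) by tauto),
          Pr_congr (p := p) (show ∀ ω, (X ω = x ∧ T ω = t ∧ RX ω = true ∧ RT ω = true)
            ↔ (RT ω = true ∧ X ω = x ∧ T ω = t ∧ RX ω = true) by tauto)]
      exact h
    -- L1 : from hRY
    have L1 : Pr p (fun ω => (Y ω = y ∧ RY ω = true) ∧ T ω = t ∧ X ω = x ∧ RX ω = true ∧ RT ω = true)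
          * Pr p (fun ω => T ω = t ∧ Y ω = y ∧ RX ω = true ∧ RT ω = true)
        = Pr p (fun ω => RY ω = true ∧ T ω = t ∧ Y ω = y ∧ RX ω = true ∧ RT ω = true)
          * Pr p (fun ω => Y ω = y ∧ X ω = x ∧ T ω = t ∧ RX ω = true ∧ RT ω = true) := by
      have h := chain2' hc4 hCy.ne' (hRY true x (t, y, true, true) (by rw [Pr_congr (p := p) hc4]; exact hCy))
      rw [Pr_congr (p := p) (show ∀ ω,
            ((Y ω = y ∧ RY ω = true) ∧ T ω = t ∧ X ω = x ∧ RX ω = true ∧ RT ω = true)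
            ↔ (RY ω = true ∧ X ω = x ∧ T ω = t ∧ Y ω = y ∧ RX ω = true ∧ RT ω = true) by tauto),
          Pr_congr (p := p) (show ∀ ω, (Y ω = y ∧ X ω = x ∧ T ω = t ∧ RX ω = true ∧ RT ω = true)
            ↔ (X ω = x ∧ T ω = t ∧ Y ω = y ∧ RX ω = true ∧ RT ω = true) by tauto)]
      exact h
    -- assemble
    rw [CPr, CPr, CPr]
    rw [Pr_congr (p := p) (show ∀ ω, (T ω = t ∧ X ω = x ∧ RX ω = true ∧ RT ω = true)
          ↔ (X ω = x ∧ T ω = t ∧ RX ω = true ∧ RT ω = true) by tauto)]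
    rw [Pr_congr (p := p) (show ∀ ω, ((Y ω = y) ∧ X ω = x ∧ T ω = t)
          ↔ (Y ω = y ∧ X ω = x ∧ T ω = t) by tauto)]
    rw [Pr_congr (p := p) (show ∀ ω, ((RY ω = true) ∧ T ω = t ∧ Y ω = y ∧ RX ω = true ∧ RT ω = true)
          ↔ (RY ω = true ∧ T ω = t ∧ Y ω = y ∧ RX ω = true ∧ RT ω = true) by tauto)]
    have eq1 : Pr p (fun ω => Y ω = y ∧ X ω = x ∧ T ω = t ∧ RX ω = true ∧ RT ω = true)
          / Pr p (fun ω => X ω = x ∧ T ω = t ∧ RX ω = true ∧ RT ω = true)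
        = Pr p (fun ω => Y ω = y ∧ X ω = x ∧ T ω = t ∧ RX ω = true)
          / Pr p (fun ω => X ω = x ∧ T ω = t ∧ RX ω = true) := by
      rw [div_eq_div_iff hA.ne' hB1.ne']
      linear_combination L2
    have eq2 : Pr p (fun ω => Y ω = y ∧ X ω = x ∧ T ω = t ∧ RX ω = true)
          / Pr p (fun ω => X ω = x ∧ T ω = t ∧ RX ω = true)
        = Pr p (fun ω => Y ω = y ∧ X ω = x ∧ T ω = t)
          / Pr p (fun ω => X ω = x ∧ T ω = t) := by
      rw [div_eq_div_iff hB1.ne' hB2.ne']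
      linear_combination L3
    have eq3 : Pr p (fun ω => (Y ω = y ∧ RY ω = true) ∧ T ω = t ∧ X ω = x ∧ RX ω = true ∧ RT ω = true)
          / Pr p (fun ω => X ω = x ∧ T ω = t ∧ RX ω = true ∧ RT ω = true)
        = (Pr p (fun ω => Y ω = y ∧ X ω = x ∧ T ω = t ∧ RX ω = true ∧ RT ω = true)
            / Pr p (fun ω => X ω = x ∧ T ω = t ∧ RX ω = true ∧ RT ω = true))
          * (Pr p (fun ω => RY ω = true ∧ T ω = t ∧ Y ω = y ∧ RX ω = true ∧ RT ω = true)
            / Pr p (fun ω => T ω = t ∧ Y ω = y ∧ RX ω = true ∧ RT ω = true)) := by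
      rw [div_mul_div_comm, div_eq_div_iff hA.ne' (mul_ne_zero hA.ne' hCy.ne')]
      linear_combination Pr p (fun ω => X ω = x ∧ T ω = t ∧ RX ω = true ∧ RT ω = true) * L1
    rw [eq3, eq1, eq2]
  have hsum : ∀ x : 𝒳,
      CPr p (fun ω => Y ω = false) (fun ω => X ω = x ∧ T ω = t)
        + CPr p (fun ω => Y ω = true) (fun ω => X ω = x ∧ T ω = t) = 1 := by
    intro x
    have hB2 : 0 < Pr p (fun ω => X ω = x ∧ T ω = t) :=
      lt_of_lt_of_le (hpos x) (Pr_mono p hp0 (by tauto))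
    rw [CPr, CPr, ← add_div, Pr_split, div_self hB2.ne']
  have hM : (Matrix.of fun (x : 𝒳) (y : Bool) =>
        CPr p (fun ω => Y ω = y ∧ RY ω = true)
          (fun ω => T ω = t ∧ X ω = x ∧ RX ω = true ∧ RT ω = true))
      = Matrix.of fun (x : 𝒳) (y : Bool) =>
        (fun x y => CPr p (fun ω => Y ω = y) (fun ω => X ω = x ∧ T ω = t)) x y
          * (fun y => CPr p (fun ω => RY ω = true)
              (fun ω => T ω = t ∧ Y ω = y ∧ RX ω = true ∧ RT ω = true)) y := by
    funext x y
    exact key x y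
  rw [hM]
  exact rank_lemma _ _ hres hsum


end CATEMNAR
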